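/- The map F_udps, regarded as a map from the class of div point sets with at least 4 points to the class of unit div point sets, is injective (Lemma 1, injectivity). -/

import Mathlib

/-!
The unit dividon `(d, δ_T)` that `F_udps` produces from a dividon `(d, δ)` and a pair `T` of
points off `d` determines `T` (it is `⋃δ_T`) and whether `T` lies inside one div of `δ`
(exactly when `∅ ∈ δ_T`). As dividers are distinct, all unit dividons with divider `d` come from
a single dividon, and a split of `P ∖ d` into two disjoint parts is determined by which pairs it
keeps together. Hence every dividon of `X` is a dividon of `Y`, and the two sets of dividons,
both of size `C(|P|, 2)`, coincide.
-/

open Finset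

/-- A (unit) dividon: an ordered pair of a divider and a set of divs. -/
abbrev Dividon : Type := Finset ℕ × Finset (Finset ℕ)

/-- A candidate (unit) div point set: a pair of a point set and a set of dividons. -/
abbrev PreDPS : Type := Finset ℕ × Finset Dividon

/-- The union `⋃δ` of a set of divs. -/
def unionOf (δ : Finset (Finset ℕ)) : Finset ℕ := δ.sup id

/-- `ξ(D) = π₁(D) ∪ ⋃π₂(D)`. -/
def xi (D : Dividon) : Finset ℕ := D.1 ∪ unionOf D.2

/-- `D = (d, δ)` is a dividon over the point set `P`. -/
def IsDividon (P : Finset ℕ) (D : Dividon) : Prop :=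
  D.1.card = 2 ∧ D.1 ⊆ P ∧
    ∃ A B : Finset ℕ, A ≠ B ∧ D.2 = {A, B} ∧ A ∪ B = P \ D.1 ∧ A ∩ B = ∅

/-- `X` is a div point set. -/
def IsDPS (X : PreDPS) : Prop :=
  X.1.Nonempty ∧ X.2.card = Nat.choose X.1.card 2 ∧
    (∀ D ∈ X.2, IsDividon X.1 D) ∧
    ∀ D₁ ∈ X.2, ∀ D₂ ∈ X.2, D₁.1 = D₂.1 → D₁ = D₂

/-- `φ(δ,T) = 1` if the two TBD points of `T` lie in the same div of `δ`,
`φ(δ,T) = 0` otherwise. -/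
def phi (δ : Finset (Finset ℕ)) (T : Finset ℕ) : ℕ :=
  if ∃ dv ∈ δ, (T ∩ dv).card = 2 then 1 else 0

/-- `ψ(δ) = 1` if some div of `δ` has two elements, `ψ(δ) = 0` otherwise. -/
def psi (δ : Finset (Finset ℕ)) : ℕ :=
  if ∃ dv ∈ δ, dv.card = 2 then 1 else 0

/-- Laws (L1), (L2), (L3) for div point sets. -/
def LawsDPS (X : PreDPS) : Prop :=
  (∀ R ⊆ X.1, R.card = 4 →
    ∀ D₁ ∈ X.2, ∀ D₂ ∈ X.2, ∀ D₃ ∈ X.2,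
      D₁.1 ∪ D₂.1 ∪ D₃.1 = R → (D₁.1 ∩ D₂.1 ∩ D₃.1).card = 1 →
      (phi D₁.2 (R \ D₁.1) = 0 ↔ phi D₂.2 (R \ D₂.1) = phi D₃.2 (R \ D₃.1))) ∧
  (∀ R ⊆ X.1, R.card = 4 →
    ∀ D₁ ∈ X.2, ∀ D₂ ∈ X.2, ∀ D₃ ∈ X.2,
      D₁.1 ∪ D₂.1 ∪ D₃.1 = R → (D₁.1 ∩ D₂.1 ∩ D₃.1).card = 1 →
      (phi D₁.2 (R \ D₁.1) = 1 ↔ phi D₂.2 (R \ D₂.1) ≠ phi D₃.2 (R \ D₃.1))) ∧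
  (∀ R ⊆ X.1, R.card = 4 →
    ∀ D₁ ∈ X.2, ∀ D₂ ∈ X.2, ∀ D₃ ∈ X.2,
      D₁ ≠ D₂ → D₁ ≠ D₃ → D₂ ≠ D₃ →
      D₁.1 ∪ D₂.1 ∪ D₃.1 ⊆ R → (D₁.1 ∪ D₂.1 ∪ D₃.1).card = 3 →
      phi D₁.2 (R \ D₁.1) = 0 → phi D₂.2 (R \ D₂.1) = 0 →
      phi D₃.2 (R \ D₃.1) = 1)

/-- The class DPS⁺: div point sets satisfying (L1), (L2), (L3). -/
def DPSplus (X : PreDPS) : Prop := IsDPS X ∧ LawsDPS X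

/-- `D = (d, δ)` is a unit dividon over the point set `P`. -/
def IsUnitDividon (P : Finset ℕ) (D : Dividon) : Prop :=
  D.1.card = 2 ∧ D.1 ⊆ P ∧
    ∃ A B : Finset ℕ, A ≠ B ∧ D.2 = {A, B} ∧ (A ∪ B).card = 2 ∧
      A ∪ B ⊆ P \ D.1 ∧ A ∩ B = ∅

/-- `U` is a unit div point set. -/
def IsUDPS (U : PreDPS) : Prop :=
  U.1.Nonempty ∧
    U.2.card = Nat.choose U.1.card 2 * Nat.choose (U.1.card - 2) 2 ∧
    (∀ D ∈ U.2, IsUnitDividon U.1 D) ∧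
    ∀ D₁ ∈ U.2, ∀ D₂ ∈ U.2,
      D₁.1 = D₂.1 → unionOf D₁.2 = unionOf D₂.2 → D₁ = D₂

/-- Laws (U1), (U2), (U3) for unit div point sets. -/
def LawsUDPS (U : PreDPS) : Prop :=
  (∀ R ⊆ U.1, R.card = 4 →
    ∀ D₁ ∈ U.2, ∀ D₂ ∈ U.2, ∀ D₃ ∈ U.2,
      D₁ ≠ D₂ → D₁ ≠ D₃ → D₂ ≠ D₃ →
      xi D₁ = R → xi D₂ = R → xi D₃ = R →
      (D₁.1 ∩ D₂.1 ∩ D₃.1).card = 1 →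
      (psi D₁.2 = 0 ↔ psi D₂.2 = psi D₃.2)) ∧
  (∀ R ⊆ U.1, R.card = 4 →
    ∀ D₁ ∈ U.2, ∀ D₂ ∈ U.2, ∀ D₃ ∈ U.2,
      D₁ ≠ D₂ → D₁ ≠ D₃ → D₂ ≠ D₃ →
      xi D₁ = R → xi D₂ = R → xi D₃ = R →
      (D₁.1 ∩ D₂.1 ∩ D₃.1).card = 1 →
      (psi D₁.2 = 1 ↔ psi D₂.2 ≠ psi D₃.2)) ∧
  (∀ R ⊆ U.1, R.card = 4 →
    ∀ D₁ ∈ U.2, ∀ D₂ ∈ U.2, ∀ D₃ ∈ U.2,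
      D₁ ≠ D₂ → D₁ ≠ D₃ → D₂ ≠ D₃ →
      xi D₁ = R → xi D₂ = R → xi D₃ = R →
      (D₁.1 ∪ D₂.1 ∪ D₃.1).card = 3 →
      psi D₁.2 = 0 → psi D₂.2 = 0 → psi D₃.2 = 1)

/-- The class UDPS⁺: unit div point sets satisfying (U1), (U2), (U3). -/
def UDPSplus (U : PreDPS) : Prop := IsUDPS U ∧ LawsUDPS U

/-- `F_udps`: breaks every dividon of a div point set into unit dividons,
one for each 2-element subset `T = {a,b}` of the TBD points: the unit dividon is
`(d, {{a,b},∅})` if `a` and `b` lie in the same div, and `(d, {{a},{b}})` otherwise. -/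
def Fudps (X : PreDPS) : PreDPS :=
  (X.1, X.2.biUnion fun D =>
    ((X.1 \ D.1).powersetCard 2).image fun T =>
      (D.1, if ∃ dv ∈ D.2, T ⊆ dv then ({T, ∅} : Finset (Finset ℕ))
            else T.image fun a => ({a} : Finset ℕ)))

/-- `Y` is the sub div point set of `X` on the point set `Ps` (where `4 ≤ |Ps|`):
the unique div point set with point set `Ps` whose image under `F_udps` has exactly
the unit dividons `D` of `F_udps X` with `ξ(D) ⊆ Ps`. -/
def IsSdps (X : PreDPS) (Ps : Finset ℕ) (Y : PreDPS) : Prop :=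
  Ps ⊆ X.1 ∧ 4 ≤ Ps.card ∧ IsDPS Y ∧ Y.1 = Ps ∧
    (Fudps Y).2 = (Fudps X).2.filter fun D => xi D ⊆ Ps

/-- Isomorphism of (candidate) div point sets. -/
def Isom (X Y : PreDPS) : Prop :=
  ∃ f : ℕ → ℕ, Set.BijOn f ↑X.1 ↑Y.1 ∧
    ∀ D ∈ X.2, (D.1.image f, D.2.image (Finset.image f)) ∈ Y.2

/-- Isomorphism of sets of (unit) dividons. -/
def OmegaIsom (Ω₁ Ω₂ : Finset Dividon) : Prop :=
  Ω₁.card = Ω₂.card ∧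
    ∃ f : ℕ → ℕ, Set.BijOn f ↑(Ω₁.sup xi) ↑(Ω₂.sup xi) ∧
      ∀ D ∈ Ω₁, (D.1.image f, D.2.image (Finset.image f)) ∈ Ω₂

/-- The div point set Conc₄¹. -/
def Conc41 : PreDPS :=
  ({1, 2, 3, 4},
   {({1, 2}, {{3}, {4}}), ({1, 3}, {{2}, {4}}), ({1, 4}, {{2}, {3}}),
    ({2, 3}, {{1, 4}, ∅}), ({2, 4}, {{1, 3}, ∅}), ({3, 4}, {{1, 2}, ∅})})

/-- The div point set Conv₄. -/
def Conv4 : PreDPS :=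
  ({1, 2, 3, 4},
   {({1, 2}, {{3, 4}, ∅}), ({1, 3}, {{2}, {4}}), ({1, 4}, {{2, 3}, ∅}),
    ({2, 3}, {{1, 4}, ∅}), ({2, 4}, {{1}, {3}}), ({3, 4}, {{1, 2}, ∅})})

/-- The div point set Conv_n on `{1, …, n}`: the dividon with divider `d = {i,j}`,
`i < j`, has divs `{p : i < p < j}` and `{p : p < i or p > j}`. -/
def ConvN (n : ℕ) : PreDPS :=
  (Finset.Icc 1 n,
   ((Finset.Icc 1 n).powersetCard 2).image fun d =>
     (d, ({(Finset.Icc 1 n).filter fun p => (∃ i ∈ d, i < p) ∧ ∃ j ∈ d, p < j,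
           (Finset.Icc 1 n).filter fun p =>
             (∀ i ∈ d, p < i) ∨ ∀ i ∈ d, i < p} : Finset (Finset ℕ))))

/-- The divs of the unit dividon that `Fudps` assigns to a pair `T` of TBD points. -/
def unitDivs (δ : Finset (Finset ℕ)) (T : Finset ℕ) : Finset (Finset ℕ) :=
  if ∃ dv ∈ δ, T ⊆ dv then ({T, ∅} : Finset (Finset ℕ))
  else T.image fun a => ({a} : Finset ℕ)

def SameDiv (δ : Finset (Finset ℕ)) (T : Finset ℕ) : Prop := ∃ dv ∈ δ, T ⊆ dv

theorem mem_Fudps_snd {Z : PreDPS} {u : Dividon} :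
    u ∈ (Fudps Z).2 ↔
      ∃ D ∈ Z.2, ∃ T ∈ (Z.1 \ D.1).powersetCard 2, (D.1, unitDivs D.2 T) = u := by
  simp only [Fudps, unitDivs, mem_biUnion, mem_image]

theorem unionOf_unitDivs (δ : Finset (Finset ℕ)) (T : Finset ℕ) :
    unionOf (unitDivs δ T) = T := by
  unfold unionOf unitDivs
  split_ifs
  · simp
  · rw [sup_image]
    exact sup_singleton_eq_self T

theorem empty_mem_unitDivs_iff {δ : Finset (Finset ℕ)} {T : Finset ℕ} :
    ∅ ∈ unitDivs δ T ↔ SameDiv δ T := by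
  unfold unitDivs SameDiv
  split_ifs with h <;> simp [h]

theorem unitDivs_injective {δ δ' : Finset (Finset ℕ)} {T T' : Finset ℕ}
    (h : unitDivs δ T = unitDivs δ' T') : T = T' ∧ (SameDiv δ T ↔ SameDiv δ' T') := by
  refine ⟨?_, ?_⟩
  · rw [← unionOf_unitDivs δ T, ← unionOf_unitDivs δ' T', h]
  · rw [← empty_mem_unitDivs_iff, ← empty_mem_unitDivs_iff, h]

theorem mem_iff_sameDiv {A B : Finset ℕ} {x y : ℕ} (hxA : x ∈ A) (hxB : x ∉ B) :
    y ∈ A ↔ SameDiv {A, B} {x, y} := by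
  constructor
  · intro hy
    exact ⟨A, mem_insert_self _ _, insert_subset hxA (singleton_subset_iff.2 hy)⟩
  · rintro ⟨dv, hdv, hsub⟩
    rcases mem_insert.1 hdv with rfl | hdv
    · exact hsub (by simp)
    · exact absurd (mem_singleton.1 hdv ▸ hsub (by simp)) hxB

theorem pair_eq_of_sameDiv_iff {S A B A' B' : Finset ℕ}
    (hU : A ∪ B = S) (hI : A ∩ B = ∅) (hU' : A' ∪ B' = S) (hI' : A' ∩ B' = ∅)
    (h : ∀ T ∈ S.powersetCard 2, SameDiv {A, B} T ↔ SameDiv {A', B'} T) :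
    ({A, B} : Finset (Finset ℕ)) = {A', B'} := by
  obtain rfl | ⟨x, hx⟩ := S.eq_empty_or_nonempty
  · obtain ⟨rfl, rfl⟩ := union_eq_empty.1 hU
    obtain ⟨rfl, rfl⟩ := union_eq_empty.1 hU'
    rfl
  wlog hxA : x ∈ A generalizing A B
  · rw [pair_comm]
    refine this (by rwa [union_comm]) (by rwa [inter_comm]) (by simpa only [pair_comm B A] using h) ?_
    exact (mem_union.1 (hU ▸ hx)).resolve_left hxA
  wlog hxA' : x ∈ A' generalizing A' B'
  · rw [pair_comm A']
    refine this (by rwa [union_comm]) (by rwa [inter_comm]) (by simpa only [pair_comm B' A'] using h) ?_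
    exact (mem_union.1 (hU' ▸ hx)).resolve_left hxA'
  have hdisj := disjoint_iff_inter_eq_empty.2 hI
  have hdisj' := disjoint_iff_inter_eq_empty.2 hI'
  have hA : A = A' := by
    ext y
    by_cases hyS : y ∈ S
    · obtain rfl | hyx := eq_or_ne y x
      · exact iff_of_true hxA hxA'
      rw [mem_iff_sameDiv hxA (disjoint_left.1 hdisj hxA),
        mem_iff_sameDiv hxA' (disjoint_left.1 hdisj' hxA'), h]
      exact mem_powersetCard.2 ⟨insert_subset hx (singleton_subset_iff.2 hyS), card_pair hyx.symm⟩
    · exact iff_of_false (fun hy => hyS (hU ▸ mem_union_left B hy))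
        (fun hy => hyS (hU' ▸ mem_union_left B' hy))
  have hB : B = B' := by
    rw [← union_sdiff_cancel_left hdisj, ← union_sdiff_cancel_left hdisj', hU, hU', hA]
  rw [hA, hB]

theorem IsDividon.snd_eq_of_sameDiv_iff {P d : Finset ℕ} {δ δ' : Finset (Finset ℕ)}
    (hD : IsDividon P (d, δ)) (hD' : IsDividon P (d, δ'))
    (h : ∀ T ∈ (P \ d).powersetCard 2, SameDiv δ T ↔ SameDiv δ' T) : δ = δ' := by
  obtain ⟨-, -, A, B, -, rfl, hU, hI⟩ := hD
  obtain ⟨-, -, A', B', -, rfl, hU', hI'⟩ := hD'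
  exact pair_eq_of_sameDiv_iff hU hI hU' hI' h

theorem exists_fst_eq_of_mk_mem_Fudps {Z : PreDPS} {d T : Finset ℕ} {δ : Finset (Finset ℕ)}
    (h : (d, unitDivs δ T) ∈ (Fudps Z).2) :
    ∃ D ∈ Z.2, D.1 = d ∧ (SameDiv D.2 T ↔ SameDiv δ T) := by
  obtain ⟨D, hD, T', -, he⟩ := mem_Fudps_snd.1 h
  obtain ⟨hd, hδ⟩ := Prod.mk.inj he
  obtain ⟨rfl, hsame⟩ := unitDivs_injective hδ
  exact ⟨D, hD, hd, hsame⟩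

theorem snd_subset_of_Fudps_eq {X Y : PreDPS} (hX : IsDPS X) (hY : IsDPS Y)
    (h4X : 4 ≤ X.1.card) (h : Fudps X = Fudps Y) : X.2 ⊆ Y.2 := by
  have hP : X.1 = Y.1 := (congrArg Prod.fst h :)
  intro D hD
  have hDX := hX.2.2.1 D hD
  have hmatch : ∀ T ∈ (X.1 \ D.1).powersetCard 2,
      ∃ D' ∈ Y.2, D'.1 = D.1 ∧ (SameDiv D'.2 T ↔ SameDiv D.2 T) := fun T hT =>
    exists_fst_eq_of_mk_mem_Fudps (h ▸ mem_Fudps_snd.2 ⟨D, hD, T, hT, rfl⟩)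
  obtain ⟨T₀, hT₀⟩ : ((X.1 \ D.1).powersetCard 2).Nonempty := by
    rw [powersetCard_nonempty, card_sdiff_of_subset hDX.2.1, hDX.1]
    omega
  obtain ⟨D', hD', hd', -⟩ := hmatch T₀ hT₀
  have hD'X : IsDividon X.1 (D.1, D'.2) := by
    rw [hP, ← hd']
    exact hY.2.2.1 D' hD'
  have hδ : D.2 = D'.2 := by
    refine IsDividon.snd_eq_of_sameDiv_iff hDX hD'X fun T hT => ?_
    obtain ⟨D'', hD'', hd'', hsame⟩ := hmatch T hT
    obtain rfl := hY.2.2.2 D'' hD'' D' hD' (hd''.trans hd'.symm)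
    exact hsame.symm
  rwa [Prod.ext hd'.symm hδ]

theorem stmt_2_general (X Y : PreDPS) (hX : IsDPS X) (hY : IsDPS Y)
    (h4X : 4 ≤ X.1.card) (h : Fudps X = Fudps Y) :
    X = Y := by
  have hP : X.1 = Y.1 := (congrArg Prod.fst h :)
  have hcard : Y.2.card ≤ X.2.card := by rw [hX.2.1, hY.2.1, hP]
  exact Prod.ext hP (eq_of_subset_of_card_le (snd_subset_of_Fudps_eq hX hY h4X h) hcard)

/-- Lemma 1 (injectivity): `F_udps` is injective on div point sets of at least 4 points. -/
theorem stmt_2 (X Y : PreDPS) (hX : IsDPS X) (hY : IsDPS Y)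
    (h4X : 4 ≤ X.1.card) (h4Y : 4 ≤ Y.1.card) (h : Fudps X = Fudps Y) :
    X = Y :=
  stmt_2_general X Y hX hY h4X h
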